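/- arXiv:2411.12249 — 7 statements merged into one kernel-verified Lean document; each statement's English description precedes it below -/
import Mathlib

section
/- Let g ≥ 2 and let I, J, K, L be subsets of {2,...,g}. Suppose I ∪ J ≠ K ∪ L or I ∩ J ≠ K ∩ L. Then there exist a permutation β of {1,...,g} and a subset T ⊆ {1,...,g} such that, setting θ·M := β⁻¹(M Δ T), at least 3 of the four sets θ·I, θ·J, θ·(Kᶜ), θ·(Lᶜ) contain the element 1. -/
/-- if `I, J, K, L ⊆ {2,...,g}` satisfy `I ∪ J ≠ K ∪ L` or `I ∩ J ≠ K ∩ L`,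
then there is an element `θ = (ε_T, β)` of the wreath product `(ℤ/2ℤ)^g ⋊ S_g`
(acting by `θ·M = β⁻¹(M Δ T)`) such that at least 3 of the four sets
`θ·I, θ·J, θ·(Kᶜ), θ·(Lᶜ)` contain the element 1. -/
theorem stmt3 (g : ℕ) (hg : 2 ≤ g)
    (I J K L : Finset ℕ)
    (hI : I ⊆ Finset.Icc 2 g) (hJ : J ⊆ Finset.Icc 2 g)
    (hK : K ⊆ Finset.Icc 2 g) (hL : L ⊆ Finset.Icc 2 g)
    (hne : I ∪ J ≠ K ∪ L ∨ I ∩ J ≠ K ∩ L) :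
    ∃ (β : Equiv.Perm ℕ) (T : Finset ℕ),
      (∀ x ∈ Finset.Icc 1 g, β x ∈ Finset.Icc 1 g) ∧ T ⊆ Finset.Icc 1 g ∧
      3 ≤ (if 1 ∈ (symmDiff I T).image ⇑β.symm then 1 else 0) +
          (if 1 ∈ (symmDiff J T).image ⇑β.symm then 1 else 0) +
          (if 1 ∈ (symmDiff (Finset.Icc 1 g \ K) T).image ⇑β.symm then 1 else 0) +
          (if 1 ∈ (symmDiff (Finset.Icc 1 g \ L) T).image ⇑β.symm then (1 : ℕ) else 0) := by
  have hsub : ∀ {S : Finset ℕ}, S ⊆ Finset.Icc 2 g → ∀ {a : ℕ}, a ∈ S → a ∈ Finset.Icc 1 g := by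
    intro S hS a ha
    have := hS ha
    simp [Finset.mem_Icc] at this ⊢
    omega
  have key : ∃ a ∈ Finset.Icc 1 g, ∃ T ⊆ Finset.Icc 1 g,
      3 ≤ (if a ∈ symmDiff I T then 1 else 0) + (if a ∈ symmDiff J T then 1 else 0) +
        (if a ∈ symmDiff (Finset.Icc 1 g \ K) T then 1 else 0) +
        (if a ∈ symmDiff (Finset.Icc 1 g \ L) T then (1:ℕ) else 0) := by
    rcases hne with h | h
    · obtain ⟨a, ha⟩ : ∃ a, ¬(a ∈ I ∪ J ↔ a ∈ K ∪ L) := by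
        by_contra hc; push_neg at hc; exact h (Finset.ext fun a => hc a)
      simp only [Finset.mem_union] at ha
      by_cases h1 : a ∈ I ∨ a ∈ J
      · have h2 : ¬(a ∈ K ∨ a ∈ L) := fun h2 => ha ⟨fun _ => h2, fun _ => h1⟩
        push_neg at h2
        have haIcc : a ∈ Finset.Icc 1 g := by
          rcases h1 with h1 | h1
          · exact hsub hI h1
          · exact hsub hJ h1
        refine ⟨a, haIcc, ∅, by simp, ?_⟩
        have c3 : a ∈ symmDiff (Finset.Icc 1 g \ K) (∅ : Finset ℕ) := by
          simp [Finset.mem_symmDiff, Finset.mem_sdiff, haIcc, h2.1]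
        have c4 : a ∈ symmDiff (Finset.Icc 1 g \ L) (∅ : Finset ℕ) := by
          simp [Finset.mem_symmDiff, Finset.mem_sdiff, haIcc, h2.2]
        rw [if_pos c3, if_pos c4]
        rcases h1 with h1 | h1
        · have c1 : a ∈ symmDiff I (∅ : Finset ℕ) := by simp [Finset.mem_symmDiff, h1]
          rw [if_pos c1]; split_ifs <;> omega
        · have c2 : a ∈ symmDiff J (∅ : Finset ℕ) := by simp [Finset.mem_symmDiff, h1]
          rw [if_pos c2]; split_ifs <;> omega
      · have h2 : a ∈ K ∨ a ∈ L := by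
          by_contra h2; exact ha ⟨fun h => absurd h h1, fun h => absurd h h2⟩
        have haIcc : a ∈ Finset.Icc 1 g := by
          rcases h2 with h2 | h2
          · exact hsub hK h2
          · exact hsub hL h2
        push_neg at h1
        refine ⟨a, haIcc, {a}, by simpa using haIcc, ?_⟩
        have c1 : a ∈ symmDiff I ({a} : Finset ℕ) := by
          simp [Finset.mem_symmDiff, h1.1]
        have c2 : a ∈ symmDiff J ({a} : Finset ℕ) := by
          simp [Finset.mem_symmDiff, h1.2]
        rw [if_pos c1, if_pos c2]
        rcases h2 with h2 | h2
        · have c3 : a ∈ symmDiff (Finset.Icc 1 g \ K) ({a} : Finset ℕ) := by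
            simp [Finset.mem_symmDiff, Finset.mem_sdiff, h2]
          rw [if_pos c3]; split_ifs <;> omega
        · have c4 : a ∈ symmDiff (Finset.Icc 1 g \ L) ({a} : Finset ℕ) := by
            simp [Finset.mem_symmDiff, Finset.mem_sdiff, h2]
          rw [if_pos c4]; split_ifs <;> omega
    · obtain ⟨a, ha⟩ : ∃ a, ¬(a ∈ I ∩ J ↔ a ∈ K ∩ L) := by
        by_contra hc; push_neg at hc; exact h (Finset.ext fun a => hc a)
      simp only [Finset.mem_inter] at ha
      by_cases h1 : a ∈ I ∧ a ∈ J
      · have h2 : ¬(a ∈ K ∧ a ∈ L) := fun h2 => ha ⟨fun _ => h2, fun _ => h1⟩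
        have haIcc : a ∈ Finset.Icc 1 g := hsub hI h1.1
        refine ⟨a, haIcc, ∅, by simp, ?_⟩
        have c1 : a ∈ symmDiff I (∅ : Finset ℕ) := by simp [Finset.mem_symmDiff, h1.1]
        have c2 : a ∈ symmDiff J (∅ : Finset ℕ) := by simp [Finset.mem_symmDiff, h1.2]
        rw [if_pos c1, if_pos c2]
        rw [not_and_or] at h2
        rcases h2 with h2 | h2
        · have c3 : a ∈ symmDiff (Finset.Icc 1 g \ K) (∅ : Finset ℕ) := by
            simp [Finset.mem_symmDiff, Finset.mem_sdiff, haIcc, h2]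
          rw [if_pos c3]; split_ifs <;> omega
        · have c4 : a ∈ symmDiff (Finset.Icc 1 g \ L) (∅ : Finset ℕ) := by
            simp [Finset.mem_symmDiff, Finset.mem_sdiff, haIcc, h2]
          rw [if_pos c4]; split_ifs <;> omega
      · have h2 : a ∈ K ∧ a ∈ L := by
          by_contra h2; exact ha ⟨fun h => absurd h h1, fun h => absurd h h2⟩
        have haIcc : a ∈ Finset.Icc 1 g := hsub hK h2.1
        rw [not_and_or] at h1
        refine ⟨a, haIcc, {a}, by simpa using haIcc, ?_⟩
        have c3 : a ∈ symmDiff (Finset.Icc 1 g \ K) ({a} : Finset ℕ) := by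
          simp [Finset.mem_symmDiff, Finset.mem_sdiff, h2.1]
        have c4 : a ∈ symmDiff (Finset.Icc 1 g \ L) ({a} : Finset ℕ) := by
          simp [Finset.mem_symmDiff, Finset.mem_sdiff, h2.2]
        rw [if_pos c3, if_pos c4]
        rcases h1 with h1 | h1
        · have c1 : a ∈ symmDiff I ({a} : Finset ℕ) := by simp [Finset.mem_symmDiff, h1]
          rw [if_pos c1]; split_ifs <;> omega
        · have c2 : a ∈ symmDiff J ({a} : Finset ℕ) := by simp [Finset.mem_symmDiff, h1]
          rw [if_pos c2]; split_ifs <;> omega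
  obtain ⟨a, haIcc, T, hT, hcount⟩ := key
  refine ⟨Equiv.swap 1 a, T, ?_, hT, ?_⟩
  · intro x hx
    rcases eq_or_ne x 1 with rfl | hx1
    · simpa [Equiv.swap_apply_left] using haIcc
    rcases eq_or_ne x a with rfl | hxa
    · simp only [Equiv.swap_apply_right]
      simp [Finset.mem_Icc]; omega
    · rw [Equiv.swap_apply_of_ne_of_ne hx1 hxa]; exact hx
  · have himg : ∀ S : Finset ℕ, (1 ∈ S.image ⇑(Equiv.swap 1 a).symm) ↔ a ∈ S := by
      intro S
      rw [Equiv.symm_swap]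
      simp only [Finset.mem_image]
      constructor
      · rintro ⟨x, hx, hx1⟩
        have : x = a := by
          have := congrArg (Equiv.swap 1 a) hx1
          simpa [Equiv.swap_apply_left] using this
        rwa [← this]
      · intro hS
        exact ⟨a, hS, Equiv.swap_apply_right 1 a⟩
    simp only [himg]
    exact hcount
end

section
/- Let g ≥ 1. In the free abelian group ℤ^{P({1,...,g})} with basis vectors ε_I indexed by subsets I of {1,...,g}, let N₁ be the subgroup generated by all elements ε_I + ε_J − ε_K − ε_L where I ∪ J = K ∪ L and I ∩ J = K ∩ L, and let M be the subgroup generated by ε_∅, ε_{1}, ..., ε_{g} (the basis vectors indexed by the empty set and the singletons). Then for any two subsets I, I' of {1,...,g} with |I| = |I'|, we have ε_I − ε_{I'} ∈ M + N₁. -/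
/-- in the free abelian group `ℤ^{P({1,...,g})}` with basis `ε_I = single I 1`,
if `N₁` is generated by the elements `ε_I + ε_J − ε_K − ε_L` with `I ∪ J = K ∪ L` and
`I ∩ J = K ∩ L`, and `M` is generated by `ε_∅` and the `ε_{j}`, then `ε_I − ε_{I'} ∈ M + N₁`
whenever `|I| = |I'|`. -/
theorem stmt4 (g : ℕ) (hg : 1 ≤ g) (I I' : Finset (Fin g)) (hcard : I.card = I'.card) :
    Finsupp.single I (1 : ℤ) - Finsupp.single I' (1 : ℤ) ∈
      AddSubgroup.closure
          ({Finsupp.single (∅ : Finset (Fin g)) (1 : ℤ)} ∪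
            Set.range fun j : Fin g => Finsupp.single ({j} : Finset (Fin g)) (1 : ℤ)) ⊔
        AddSubgroup.closure
          {x : Finset (Fin g) →₀ ℤ |
            ∃ A B C D : Finset (Fin g), A ∪ B = C ∪ D ∧ A ∩ B = C ∩ D ∧
              x = Finsupp.single A 1 + Finsupp.single B 1 -
                Finsupp.single C 1 - Finsupp.single D 1} := by
  set M := AddSubgroup.closure
      ({Finsupp.single (∅ : Finset (Fin g)) (1 : ℤ)} ∪
        Set.range fun j : Fin g => Finsupp.single ({j} : Finset (Fin g)) (1 : ℤ)) with hM
  set N := AddSubgroup.closure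
      {x : Finset (Fin g) →₀ ℤ |
        ∃ A B C D : Finset (Fin g), A ∪ B = C ∪ D ∧ A ∩ B = C ∩ D ∧
          x = Finsupp.single A 1 + Finsupp.single B 1 -
            Finsupp.single C 1 - Finsupp.single D 1} with hN
  have hempty : Finsupp.single (∅ : Finset (Fin g)) (1 : ℤ) ∈ M :=
    AddSubgroup.subset_closure (Or.inl rfl)
  have hsing : ∀ i : Fin g, Finsupp.single ({i} : Finset (Fin g)) (1 : ℤ) ∈ M :=
    fun i => AddSubgroup.subset_closure (Or.inr ⟨i, rfl⟩)
  have key : ∀ (J : Finset (Fin g)) (i : Fin g), i ∈ J →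
      Finsupp.single J (1 : ℤ) - Finsupp.single (J.erase i) (1 : ℤ) ∈ M ⊔ N := by
    intro J i hi
    have hx : Finsupp.single J (1 : ℤ) + Finsupp.single (∅ : Finset (Fin g)) 1 -
        Finsupp.single (J.erase i) 1 - Finsupp.single ({i} : Finset (Fin g)) 1 ∈ N := by
      apply AddSubgroup.subset_closure
      refine ⟨J, ∅, J.erase i, {i}, ?_, ?_, rfl⟩
      · rw [Finset.union_empty, Finset.union_comm, ← Finset.insert_eq, Finset.insert_erase hi]
      · simp [Finset.inter_comm, Finset.inter_singleton_of_notMem (Finset.notMem_erase i J)]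
    have h1 : Finsupp.single J (1 : ℤ) - Finsupp.single (J.erase i) 1 =
        (Finsupp.single J (1 : ℤ) + Finsupp.single (∅ : Finset (Fin g)) 1 -
          Finsupp.single (J.erase i) 1 - Finsupp.single ({i} : Finset (Fin g)) 1)
        + Finsupp.single ({i} : Finset (Fin g)) 1
        - Finsupp.single (∅ : Finset (Fin g)) 1 := by abel
    rw [h1]
    exact sub_mem (add_mem (AddSubgroup.mem_sup_right hx)
      (AddSubgroup.mem_sup_left (hsing i))) (AddSubgroup.mem_sup_left hempty)
  have main : ∀ (n : ℕ) (J J' : Finset (Fin g)), J.card = n → J'.card = n →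
      Finsupp.single J (1 : ℤ) - Finsupp.single J' (1 : ℤ) ∈ M ⊔ N := by
    intro n
    induction n with
    | zero =>
      intro J J' hJ hJ'
      rw [Finset.card_eq_zero] at hJ hJ'
      subst hJ; subst hJ'
      simpa using zero_mem (M ⊔ N)
    | succ n ih =>
      intro J J' hJ hJ'
      obtain ⟨i, hi⟩ := Finset.card_pos.mp (by omega : 0 < J.card)
      obtain ⟨i', hi'⟩ := Finset.card_pos.mp (by omega : 0 < J'.card)
      have e1 := key J i hi
      have e2 := key J' i' hi'
      have e3 := ih (J.erase i) (J'.erase i')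
        (by rw [Finset.card_erase_of_mem hi, hJ]; omega)
        (by rw [Finset.card_erase_of_mem hi', hJ']; omega)
      have h1 : Finsupp.single J (1 : ℤ) - Finsupp.single J' 1 =
          (Finsupp.single J (1 : ℤ) - Finsupp.single (J.erase i) 1)
          + (Finsupp.single (J.erase i) (1 : ℤ) - Finsupp.single (J'.erase i') 1)
          - (Finsupp.single J' (1 : ℤ) - Finsupp.single (J'.erase i') 1) := by abel
      rw [h1]
      exact sub_mem (add_mem e1 e3) e2
  exact main I.card I I' rfl hcard.symm
end

section
/- Let g ≥ 1. In the free abelian group ℤ^{P({1,...,g})} with basis vectors ε_I indexed by subsets I of {1,...,g}, equipped with the inner product making the ε_I orthonormal, let N₁ be the subgroup generated by all ε_I + ε_J − ε_K − ε_L with I ∪ J = K ∪ L and I ∩ J = K ∩ L, and let M be the subgroup generated by ε_∅ and ε_{j} for j ∈ {1,...,g}. Then any vector orthogonal to both M and N₁ is zero; equivalently, M + N₁ spans, over ℚ, the whole space ℚ^{P({1,...,g})}. -/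
/-- in `ℤ^{P({1,...,g})}` with the inner product making the basis `(ε_I)`
orthonormal, any vector orthogonal to the subgroup `M` generated by `ε_∅, ε_{1}, ..., ε_{g}`
and to the subgroup `N₁` generated by the quadratic elements `ε_I + ε_J − ε_K − ε_L`
(`I ∪ J = K ∪ L`, `I ∩ J = K ∩ L`) is zero. -/
theorem stmt5 (g : ℕ) (hg : 1 ≤ g) (v : Finset (Fin g) →₀ ℤ)
    (hM : ∀ m ∈ AddSubgroup.closure
        ({Finsupp.single (∅ : Finset (Fin g)) (1 : ℤ)} ∪
          Set.range fun j : Fin g => Finsupp.single ({j} : Finset (Fin g)) (1 : ℤ)),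
      v.sum (fun I a => a * m I) = 0)
    (hN : ∀ n ∈ AddSubgroup.closure
        {x : Finset (Fin g) →₀ ℤ |
          ∃ A B C D : Finset (Fin g), A ∪ B = C ∪ D ∧ A ∩ B = C ∩ D ∧
            x = Finsupp.single A 1 + Finsupp.single B 1 -
              Finsupp.single C 1 - Finsupp.single D 1},
      v.sum (fun I a => a * n I) = 0) :
    v = 0 := by
  have key : ∀ S : Finset (Fin g),
      (∑ I ∈ v.support, v I * (Finsupp.single S (1:ℤ)) I) = v S := by
    intro S
    rw [Finset.sum_eq_single S]
    · simp
    · intro b _ hbS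
      simp [Finsupp.single_apply, Ne.symm hbS]
    · intro h
      simp [Finsupp.notMem_support_iff.mp h]
  have hempty : v ∅ = 0 := by
    have := hM _ (AddSubgroup.subset_closure (Or.inl rfl))
    rwa [Finsupp.sum, key] at this
  have hsingle : ∀ j : Fin g, v {j} = 0 := by
    intro j
    have := hM _ (AddSubgroup.subset_closure (Or.inr ⟨j, rfl⟩))
    rwa [Finsupp.sum, key] at this
  have quad : ∀ A B C D : Finset (Fin g), A ∪ B = C ∪ D → A ∩ B = C ∩ D →
      v A + v B - v C - v D = 0 := by
    intro A B C D h1 h2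
    have := hN _ (AddSubgroup.subset_closure ⟨A, B, C, D, h1, h2, rfl⟩)
    rw [Finsupp.sum] at this
    simp only [Finsupp.add_apply, Finsupp.sub_apply, mul_add, mul_sub] at this
    rw [Finset.sum_sub_distrib, Finset.sum_sub_distrib, Finset.sum_add_distrib,
      key, key, key, key] at this
    linarith
  have hz : ∀ S : Finset (Fin g), v S = 0 := by
    intro S
    induction S using Finset.strongInduction with
    | _ S ih =>
      rcases S.eq_empty_or_nonempty with rfl | ⟨i, hi⟩
      · exact hempty
      · have hrel := quad S ∅ (S.erase i) {i} (by
            ext x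
            simp only [Finset.union_empty, Finset.mem_union, Finset.mem_erase,
              Finset.mem_singleton]
            rcases eq_or_ne x i with rfl | h
            · simp [hi]
            · simp [h]) (by
            rw [Finset.inter_empty]
            ext x
            simp only [Finset.notMem_empty, Finset.mem_inter, Finset.mem_erase,
              Finset.mem_singleton, false_iff]
            tauto)
        have hJ : v (S.erase i) = 0 := by
          rcases eq_or_ne (S.erase i) S with h | h
          · exact absurd (h ▸ Finset.notMem_erase i S) (fun H => H hi)
          · exact ih _ (Finset.ssubset_iff_of_subset (Finset.erase_subset i S) |>.mpr
              ⟨i, hi, Finset.notMem_erase i S⟩)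
        rw [hempty, hJ, hsingle] at hrel
        linarith
  ext S
  exact hz S
end

section
/- Let g ≥ 1 and let rec* : ℤ^{P({1,...,g})} → ℤ^{2g} be the ℤ-linear map with rec*(ε_I) = Σ_{j ∉ I} φ_j + Σ_{j ∈ I} φ̄_j. Then the kernel N' of rec* is generated, as an abelian group, by the elements ε_I + ε_J − ε_K − ε_L with I ∪ J = K ∪ L and I ∩ J = K ∩ L. -/
/-!
Modulo the quadratic relations one can peel elements off a set one at a time, using
`ε_I + ε_{j} - ε_{I ∪ {j}} - ε_∅` for `j ∉ I`, so that
`ε_I ≡ Σ_{j ∈ I} ε_{j} + (1 - |I|) ε_∅`. The right-hand side is a linear function of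
`rec*(ε_I)`: the coefficient of `ε_{j}` is the `φ̄_j`-coordinate, and the total mass, needed
for the coefficient of `ε_∅`, is `φ_{j₀} + φ̄_{j₀}` at any index `j₀`.
Hence every `x` is congruent to a linear function of `rec* x`, which vanishes on the kernel.
Conversely the relations lie in the kernel because `1_I + 1_J = 1_{I ∪ J} + 1_{I ∩ J}`.
-/

/-- The map `rec* : ℤ^{P({1,...,g})} → ℤ^{2g}` sending the basis vector `ε_I` to
`Σ_{j ∉ I} φ_j + Σ_{j ∈ I} φ̄_j`, where `ℤ^{2g}` is realised as pairs of functions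
`Fin g → ℤ` (the first component recording the `φ_j`-coordinates and the second the
`φ̄_j`-coordinates). -/
noncomputable def recStar (g : ℕ) :
    (Finset (Fin g) →₀ ℤ) →ₗ[ℤ] ((Fin g → ℤ) × (Fin g → ℤ)) :=
  Finsupp.linearCombination ℤ fun I =>
    ((fun j => if j ∈ I then 0 else 1), fun j => if j ∈ I then 1 else 0)

open Finset Finsupp

section Relations

variable (α : Type*) [DecidableEq α]

noncomputable def quadraticRelations : Submodule ℤ (Finset α →₀ ℤ) :=
  Submodule.span ℤ
    {x | ∃ I J K L : Finset α, I ∪ J = K ∪ L ∧ I ∩ J = K ∩ L ∧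
      x = single I 1 + single J 1 - single K 1 - single L 1}

variable {α}

theorem single_add_single_sub_union_sub_inter_mem (I J : Finset α) :
    single I 1 + single J 1 - single (I ∪ J) 1 - single (I ∩ J) 1 ∈ quadraticRelations α :=
  Submodule.subset_span ⟨I, J, I ∪ J, I ∩ J, (union_eq_left.2 inter_subset_union).symm,
    (inter_eq_right.2 inter_subset_union).symm, rfl⟩

theorem single_sub_sum_singletons_mem (I : Finset α) :
    single I 1 - (∑ j ∈ I, single {j} 1 + (1 - #I : ℤ) • single ∅ 1) ∈
      quadraticRelations α := by
  induction I using Finset.induction_on with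
  | empty => simp
  | @insert a s ha ih =>
    have hrel := single_add_single_sub_union_sub_inter_mem s {a}
    rw [union_singleton, inter_singleton_of_notMem ha] at hrel
    convert Submodule.sub_mem _ ih hrel using 1
    rw [sum_insert ha, card_insert_of_notMem ha]
    push_cast
    module

theorem ite_mem_add_ite_mem {M : Type*} [AddCommMonoid M] {I J K L : Finset α}
    (hU : I ∪ J = K ∪ L) (hI : I ∩ J = K ∩ L) (j : α) (a b : M) :
    (if j ∈ I then a else b) + (if j ∈ J then a else b) =
      (if j ∈ K then a else b) + (if j ∈ L then a else b) := by
  have hu := congrArg (j ∈ ·) hU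
  have hi := congrArg (j ∈ ·) hI
  simp only [mem_union, mem_inter, eq_iff_iff] at hu hi
  by_cases j ∈ I <;> by_cases j ∈ J <;> by_cases j ∈ K <;> by_cases j ∈ L <;>
    simp_all [add_comm]

end Relations

noncomputable def decode {α : Type*} [Fintype α] [DecidableEq α] (j₀ : α) :
    ((α → ℤ) × (α → ℤ)) →ₗ[ℤ] (Finset α →₀ ℤ) where
  toFun p := ∑ j, p.2 j • single {j} 1 + (p.1 j₀ + p.2 j₀ - ∑ j, p.2 j) • single ∅ 1
  map_add' p q := by
    simp only [Prod.fst_add, Prod.snd_add, Pi.add_apply, add_smul, sum_add_distrib]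
    module
  map_smul' c p := by
    simp only [Prod.smul_fst, Prod.smul_snd, Pi.smul_apply, smul_eq_mul, mul_smul,
      ← Finset.smul_sum, ← Finset.mul_sum, RingHom.id_apply]
    module

theorem decode_recStar_single {g : ℕ} (j₀ : Fin g) (I : Finset (Fin g)) :
    decode j₀ (recStar g (single I 1)) =
      ∑ j ∈ I, single {j} 1 + (1 - #I : ℤ) • single ∅ 1 := by
  simp only [recStar, decode, linearCombination_single, one_smul, LinearMap.coe_mk,
    AddHom.coe_mk, ite_smul, zero_smul]
  have htotal : (if j₀ ∈ I then 0 else 1) + (if j₀ ∈ I then 1 else 0) = (1 : ℤ) := by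
    split_ifs <;> rfl
  simp only [sum_ite_mem, univ_inter, htotal, sum_const, nsmul_eq_mul, mul_one]

theorem sub_decode_recStar_mem {g : ℕ} (j₀ : Fin g) (x : Finset (Fin g) →₀ ℤ) :
    x - decode j₀ (recStar g x) ∈ quadraticRelations (Fin g) := by
  induction x using Finsupp.induction_linear with
  | zero => simp
  | add x y hx hy =>
    convert Submodule.add_mem _ hx hy using 1
    simp only [map_add]
    abel
  | single I n =>
    convert (quadraticRelations (Fin g)).smul_mem n (single_sub_sum_singletons_mem I) using 1
    rw [← decode_recStar_single j₀, ← smul_single_one, map_smul, map_smul, smul_sub]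

theorem ker_recStar_le {g : ℕ} (j₀ : Fin g) :
    LinearMap.ker (recStar g) ≤ quadraticRelations (Fin g) := by
  intro x hx
  simpa [LinearMap.mem_ker.1 hx] using sub_decode_recStar_mem j₀ x

theorem quadraticRelations_le_ker_recStar (g : ℕ) :
    quadraticRelations (Fin g) ≤ LinearMap.ker (recStar g) := by
  rw [quadraticRelations, Submodule.span_le]
  rintro _ ⟨I, J, K, L, hU, hI, rfl⟩
  rw [SetLike.mem_coe, LinearMap.mem_ker, sub_sub, map_sub, sub_eq_zero]
  simp only [recStar, map_add, linearCombination_single, one_smul]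
  ext j <;> simp only [Prod.fst_add, Prod.snd_add, Pi.add_apply, ite_mem_add_ite_mem hU hI]

/-- the kernel `N'` of `rec*` is generated (as an abelian group, i.e. as a
`ℤ`-submodule) by the elements `ε_I + ε_J − ε_K − ε_L` with `I ∪ J = K ∪ L` and
`I ∩ J = K ∩ L`. -/
theorem stmt8 (g : ℕ) (hg : 1 ≤ g) :
    LinearMap.ker (recStar g) =
      Submodule.span ℤ
        {x : Finset (Fin g) →₀ ℤ |
          ∃ I J K L : Finset (Fin g), I ∪ J = K ∪ L ∧ I ∩ J = K ∩ L ∧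
            x = Finsupp.single I 1 + Finsupp.single J 1 -
              Finsupp.single K 1 - Finsupp.single L 1} :=
  le_antisymm (ker_recStar_le ⟨0, hg⟩) (quadraticRelations_le_ker_recStar g)
end

section
/- Let g ≥ 1 and let rec* : ℤ^{P({1,...,g})} → ℤ^{2g} be the map with rec*(ε_I) = Σ_{j ∉ I} φ_j + Σ_{j ∈ I} φ̄_j, and let N' = ker(rec*). Then ℤ^{P({1,...,g})} = M ⊕ N', where M is the subgroup generated by ε_∅, ε_{1}, ..., ε_{g}. In particular, the image of rec* is free of rank g + 1. -/
/-!
The composite `s ∘ rec*`, for a right inverse `s` of `rec*` on its range, is an idempotent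
with kernel `ker rec*`, hence splits `ℤ^{P({1,...,g})}` as its range plus `ker rec*`. With
`s (a, b) = (a j₀ + b j₀) ε_∅ + Σ_j b_j (ε_{j} - ε_∅)` this range is exactly `M`: `s` takes
values in `M` and fixes its generators. Then `range rec* ≅ ℤ^P ⧸ N' ≅ M`, which is free on
its `g + 1` generators.
-/

open LinearMap Submodule

theorem LinearMap.isCompl_range_comp_ker_of_comp_comp_eq {R E F : Type*} [Ring R]
    [AddCommGroup E] [Module R E] [AddCommGroup F] [Module R F] {f : E →ₗ[R] F}
    {s : F →ₗ[R] E} (h : f ∘ₗ s ∘ₗ f = f) : IsCompl (range (s ∘ₗ f)) (ker f) := by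
  have hidem : IsIdempotentElem (s ∘ₗ f) := by
    change s ∘ₗ (f ∘ₗ s ∘ₗ f) = s ∘ₗ f
    rw [h]
  have hker : ker (s ∘ₗ f) = ker f := by
    refine le_antisymm (fun x hx => ?_) (ker_le_ker_comp f s)
    rw [mem_ker, ← h, comp_apply]
    exact congrArg f hx |>.trans f.map_zero
  simpa only [hker] using hidem.isCompl

variable {g : ℕ}

noncomputable def singleEmptyOrSingleton (g : ℕ) : Option (Fin g) → (Finset (Fin g) →₀ ℤ) :=
  fun o => Finsupp.single (o.elim ∅ singleton) 1

theorem range_singleEmptyOrSingleton :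
    Set.range (singleEmptyOrSingleton g) =
      {Finsupp.single ∅ 1} ∪ Set.range fun j : Fin g => Finsupp.single {j} 1 := by
  ext x
  simp [singleEmptyOrSingleton, Option.exists, eq_comm]

theorem linearIndependent_singleEmptyOrSingleton :
    LinearIndependent ℤ (singleEmptyOrSingleton g) := by
  have hinj :
      Function.Injective fun o : Option (Fin g) => o.elim (∅ : Finset (Fin g)) singleton := by
    rintro (_ | a) (_ | b) h
    · rfl
    · exact absurd h.symm (Finset.singleton_ne_empty b)
    · exact absurd h (Finset.singleton_ne_empty a)
    · exact congrArg some (Finset.singleton_injective h)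
  exact (Finsupp.linearIndependent_single_one ℤ (Finset (Fin g))).comp _ hinj

theorem recStar_single (I : Finset (Fin g)) :
    recStar g (Finsupp.single I 1) =
      ((fun j => if j ∈ I then 0 else 1), fun j => if j ∈ I then 1 else 0) := by
  simp [recStar]

/-- A right inverse of `recStar g` on its range: there `a + b` is constant, and `a j₀ + b j₀`
reads off that constant. -/
noncomputable def recStarSection (j₀ : Fin g) :
    ((Fin g → ℤ) × (Fin g → ℤ)) →ₗ[ℤ] (Finset (Fin g) →₀ ℤ) where
  toFun v := (v.1 j₀ + v.2 j₀) • Finsupp.single ∅ 1 +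
    ∑ j, v.2 j • (Finsupp.single {j} 1 - Finsupp.single ∅ 1)
  map_add' v w := by
    simp only [Prod.fst_add, Prod.snd_add, Pi.add_apply, add_smul, Finset.sum_add_distrib]
    abel
  map_smul' c v := by
    simp only [Prod.smul_fst, Prod.smul_snd, Pi.smul_apply, smul_eq_mul, Finset.smul_sum,
      RingHom.id_apply, smul_add, mul_smul, ← mul_add]

theorem recStar_recStarSection (j₀ : Fin g) (a b : Fin g → ℤ) :
    recStar g (recStarSection j₀ (a, b)) = (fun j => a j₀ + b j₀ - b j, b) := by
  simp only [recStarSection, LinearMap.coe_mk, AddHom.coe_mk, map_add, map_smul, map_sum,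
    map_sub, recStar_single]
  ext j <;>
    simp [Prod.fst_sum, Prod.snd_sum, Finset.sum_apply, ite_sub, mul_ite, ← sub_eq_add_neg]

theorem recStar_comp_recStarSection_comp_recStar (j₀ : Fin g) :
    recStar g ∘ₗ recStarSection j₀ ∘ₗ recStar g = recStar g := by
  ext I : 2
  simp only [comp_apply, Finsupp.lsingle_apply, recStar_single, recStar_recStarSection]
  congr
  ext j
  by_cases hj₀ : j₀ ∈ I <;> by_cases hj : j ∈ I <;> simp [hj₀, hj]

theorem recStarSection_recStar_singleEmptyOrSingleton (j₀ : Fin g) (o : Option (Fin g)) :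
    recStarSection j₀ (recStar g (singleEmptyOrSingleton g o)) = singleEmptyOrSingleton g o := by
  rcases o with _ | j
  · simp [singleEmptyOrSingleton, recStarSection, recStar_single]
  · by_cases h : j₀ = j <;> simp [singleEmptyOrSingleton, recStarSection, recStar_single, h]

theorem range_recStarSection_comp_recStar (j₀ : Fin g) :
    range (recStarSection j₀ ∘ₗ recStar g) =
      span ℤ (Set.range (singleEmptyOrSingleton g)) := by
  refine le_antisymm ?_ (span_le.2 ?_)
  · rintro _ ⟨x, rfl⟩
    have hgen (o) :
        singleEmptyOrSingleton g o ∈ span ℤ (Set.range (singleEmptyOrSingleton g)) :=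
      subset_span ⟨o, rfl⟩
    exact add_mem (smul_mem _ _ (hgen none)) <|
      sum_mem fun j _ => smul_mem _ _ (sub_mem (hgen (some j)) (hgen none))
  · rintro _ ⟨o, rfl⟩
    exact ⟨singleEmptyOrSingleton g o, recStarSection_recStar_singleEmptyOrSingleton j₀ o⟩

/-- `ℤ^{P({1,...,g})} = M ⊕ N'`, where `M` is the subgroup generated by
`ε_∅, ε_{1}, ..., ε_{g}` and `N' = ker(rec*)`; in particular the image of `rec*` is free
of rank `g + 1`. -/
theorem stmt9 (g : ℕ) (hg : 1 ≤ g) :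
    IsCompl
        (Submodule.span ℤ
          ({Finsupp.single (∅ : Finset (Fin g)) (1 : ℤ)} ∪
            Set.range fun j : Fin g => Finsupp.single ({j} : Finset (Fin g)) (1 : ℤ)))
        (LinearMap.ker (recStar g)) ∧
      Module.Free ℤ ↥(LinearMap.range (recStar g)) ∧
      Module.finrank ℤ ↥(LinearMap.range (recStar g)) = g + 1 := by
  rw [← range_singleEmptyOrSingleton]
  have hcompl : IsCompl (span ℤ (Set.range (singleEmptyOrSingleton g))) (ker (recStar g)) := by
    rw [← range_recStarSection_comp_recStar ⟨0, hg⟩]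
    exact isCompl_range_comp_ker_of_comp_comp_eq (recStar_comp_recStarSection_comp_recStar _)
  let e : range (recStar g) ≃ₗ[ℤ] span ℤ (Set.range (singleEmptyOrSingleton g)) :=
    (quotKerEquivRange (recStar g)).symm ≪≫ₗ quotientEquivOfIsCompl _ _ hcompl.symm
  have : Module.Free ℤ (span ℤ (Set.range (singleEmptyOrSingleton g))) :=
    .of_basis (.span linearIndependent_singleEmptyOrSingleton)
  refine ⟨hcompl, Module.Free.of_equiv e.symm, ?_⟩
  rw [e.finrank_eq, finrank_span_eq_card linearIndependent_singleEmptyOrSingleton,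
    Fintype.card_option, Fintype.card_fin]
end

section
/- Let g ≥ 1 and let the cyclic group ℤ/18ℤ act on itself by translation. Consider the ℤ-linear map from the free abelian group on {[0],[2],[3],[6],[10],[13],[14],[16],[17]} ⊂ ℤ/18ℤ to ℤ^{ℤ/18ℤ}, pairing against the translates of Φ = {[0],[2],[3],[6],[10],[13],[14],[16],[17]} via the pairing ⟨[a],[b]⟩ = 1 if a = b, −1 if a = b + 9, 0 otherwise. Then the kernel (vectors v with ⟨v, Σ_{[b]∈Φ}[a+b]⟩ = 0 for all [a]) is the rank-2 subgroup generated by [0]−[2]−[3]+[6]−[14]+[17] and [0]−[3]+[6]−[10]+[13]−[16]. -/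
/-- The CM type `Φ = {[0],[2],[3],[6],[10],[13],[14],[16],[17]}` on `ℚ(μ₁₉)`, whose Galois
group is `ℤ/18ℤ` with complex conjugation `[9]`. -/
def PhiEx : Finset (ZMod 18) := {0, 2, 3, 6, 10, 13, 14, 16, 17}

/-- The first generator `[0]−[2]−[3]+[6]−[14]+[17]` of the kernel. -/
noncomputable def vEx1 : ZMod 18 →₀ ℤ :=
  Finsupp.single 0 1 - Finsupp.single 2 1 - Finsupp.single 3 1 + Finsupp.single 6 1 -
    Finsupp.single 14 1 + Finsupp.single 17 1

/-- The second generator `[0]−[3]+[6]−[10]+[13]−[16]` of the kernel. -/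
noncomputable def vEx2 : ZMod 18 →₀ ℤ :=
  Finsupp.single 0 1 - Finsupp.single 3 1 + Finsupp.single 6 1 - Finsupp.single 10 1 +
    Finsupp.single 13 1 - Finsupp.single 16 1

lemma sumPhi (f : ZMod 18 → ℤ) : ∑ b ∈ PhiEx, f b =
    f 0 + f 2 + f 3 + f 6 + f 10 + f 13 + f 14 + f 16 + f 17 := by
  rw [PhiEx]
  rw [Finset.sum_insert (by decide), Finset.sum_insert (by decide),
      Finset.sum_insert (by decide), Finset.sum_insert (by decide),
      Finset.sum_insert (by decide), Finset.sum_insert (by decide),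
      Finset.sum_insert (by decide), Finset.sum_insert (by decide)]
  simp [Finset.sum_singleton]
  ring

lemma zmodCases (a : ZMod 18) : a = 0 ∨ a = 1 ∨ a = 2 ∨ a = 3 ∨ a = 4 ∨ a = 5 ∨ a = 6 ∨ a = 7 ∨ a = 8 ∨ a = 9 ∨ a = 10 ∨ a = 11 ∨ a = 12 ∨ a = 13 ∨ a = 14 ∨ a = 15 ∨ a = 16 ∨ a = 17 := by
  revert a; decide

lemma w1_0 : vEx1 0 = 1 := by
  simp (config := { decide := true }) [vEx1, Finsupp.single_apply]
lemma w1_1 : vEx1 1 = 0 := by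
  simp (config := { decide := true }) [vEx1, Finsupp.single_apply]
lemma w1_2 : vEx1 2 = -1 := by
  simp (config := { decide := true }) [vEx1, Finsupp.single_apply]
lemma w1_3 : vEx1 3 = -1 := by
  simp (config := { decide := true }) [vEx1, Finsupp.single_apply]
lemma w1_4 : vEx1 4 = 0 := by
  simp (config := { decide := true }) [vEx1, Finsupp.single_apply]
lemma w1_5 : vEx1 5 = 0 := by
  simp (config := { decide := true }) [vEx1, Finsupp.single_apply]
lemma w1_6 : vEx1 6 = 1 := by
  simp (config := { decide := true }) [vEx1, Finsupp.single_apply]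
lemma w1_7 : vEx1 7 = 0 := by
  simp (config := { decide := true }) [vEx1, Finsupp.single_apply]
lemma w1_8 : vEx1 8 = 0 := by
  simp (config := { decide := true }) [vEx1, Finsupp.single_apply]
lemma w1_9 : vEx1 9 = 0 := by
  simp (config := { decide := true }) [vEx1, Finsupp.single_apply]
lemma w1_10 : vEx1 10 = 0 := by
  simp (config := { decide := true }) [vEx1, Finsupp.single_apply]
lemma w1_11 : vEx1 11 = 0 := by
  simp (config := { decide := true }) [vEx1, Finsupp.single_apply]
lemma w1_12 : vEx1 12 = 0 := by
  simp (config := { decide := true }) [vEx1, Finsupp.single_apply]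
lemma w1_13 : vEx1 13 = 0 := by
  simp (config := { decide := true }) [vEx1, Finsupp.single_apply]
lemma w1_14 : vEx1 14 = -1 := by
  simp (config := { decide := true }) [vEx1, Finsupp.single_apply]
lemma w1_15 : vEx1 15 = 0 := by
  simp (config := { decide := true }) [vEx1, Finsupp.single_apply]
lemma w1_16 : vEx1 16 = 0 := by
  simp (config := { decide := true }) [vEx1, Finsupp.single_apply]
lemma w1_17 : vEx1 17 = 1 := by
  simp (config := { decide := true }) [vEx1, Finsupp.single_apply]
lemma w2_0 : vEx2 0 = 1 := by
  simp (config := { decide := true }) [vEx2, Finsupp.single_apply]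
lemma w2_1 : vEx2 1 = 0 := by
  simp (config := { decide := true }) [vEx2, Finsupp.single_apply]
lemma w2_2 : vEx2 2 = 0 := by
  simp (config := { decide := true }) [vEx2, Finsupp.single_apply]
lemma w2_3 : vEx2 3 = -1 := by
  simp (config := { decide := true }) [vEx2, Finsupp.single_apply]
lemma w2_4 : vEx2 4 = 0 := by
  simp (config := { decide := true }) [vEx2, Finsupp.single_apply]
lemma w2_5 : vEx2 5 = 0 := by
  simp (config := { decide := true }) [vEx2, Finsupp.single_apply]
lemma w2_6 : vEx2 6 = 1 := by
  simp (config := { decide := true }) [vEx2, Finsupp.single_apply]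
lemma w2_7 : vEx2 7 = 0 := by
  simp (config := { decide := true }) [vEx2, Finsupp.single_apply]
lemma w2_8 : vEx2 8 = 0 := by
  simp (config := { decide := true }) [vEx2, Finsupp.single_apply]
lemma w2_9 : vEx2 9 = 0 := by
  simp (config := { decide := true }) [vEx2, Finsupp.single_apply]
lemma w2_10 : vEx2 10 = -1 := by
  simp (config := { decide := true }) [vEx2, Finsupp.single_apply]
lemma w2_11 : vEx2 11 = 0 := by
  simp (config := { decide := true }) [vEx2, Finsupp.single_apply]
lemma w2_12 : vEx2 12 = 0 := by
  simp (config := { decide := true }) [vEx2, Finsupp.single_apply]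
lemma w2_13 : vEx2 13 = 1 := by
  simp (config := { decide := true }) [vEx2, Finsupp.single_apply]
lemma w2_14 : vEx2 14 = 0 := by
  simp (config := { decide := true }) [vEx2, Finsupp.single_apply]
lemma w2_15 : vEx2 15 = 0 := by
  simp (config := { decide := true }) [vEx2, Finsupp.single_apply]
lemma w2_16 : vEx2 16 = -1 := by
  simp (config := { decide := true }) [vEx2, Finsupp.single_apply]
lemma w2_17 : vEx2 17 = 0 := by
  simp (config := { decide := true }) [vEx2, Finsupp.single_apply]

set_option maxHeartbeats 2000000 in
/-- for `v` in the free abelian group on `Φ ⊂ ℤ/18ℤ`, the orthogonality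
conditions `⟨v, Σ_{b ∈ Φ}[a+b]⟩ = 0` for all `a` (with the pairing `⟨[x],[c]⟩ = 1` if
`x = c`, `−1` if `x = c + 9`, `0` otherwise, so that `⟨v, [c]⟩ = v(c) − v(c+9)`) cut out
exactly the rank-2 subgroup generated by `vEx1` and `vEx2`. -/
theorem stmt16 :
    LinearIndependent ℤ ![vEx1, vEx2] ∧
      ∀ v : ZMod 18 →₀ ℤ, v.support ⊆ PhiEx →
        ((∀ a : ZMod 18, ∑ b ∈ PhiEx, (v (a + b) - v (a + b + 9)) = 0) ↔
          v ∈ AddSubgroup.closure {vEx1, vEx2}) := by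
  constructor
  · rw [LinearIndependent.pair_iff]
    intro s t h
    have h17 := DFunLike.congr_fun h 17
    have h16 := DFunLike.congr_fun h 16
    simp (config := { decide := true }) [vEx1, vEx2, Finsupp.single_apply] at h17 h16
    exact ⟨h17, h16⟩
  intro v hsupp
  constructor
  · intro h
    have z : ∀ c : ZMod 18, c ∉ PhiEx → v c = 0 := fun c hc =>
      Finsupp.notMem_support_iff.mp (fun hm => hc (hsupp hm))
    have z1 : v 1 = 0 := z 1 (by decide)
    have z4 : v 4 = 0 := z 4 (by decide)
    have z5 : v 5 = 0 := z 5 (by decide)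
    have z7 : v 7 = 0 := z 7 (by decide)
    have z8 : v 8 = 0 := z 8 (by decide)
    have z9 : v 9 = 0 := z 9 (by decide)
    have z11 : v 11 = 0 := z 11 (by decide)
    have z12 : v 12 = 0 := z 12 (by decide)
    have z15 : v 15 = 0 := z 15 (by decide)
    have e0 := h 0
    have e1 := h 1
    have e2 := h 2
    have e3 := h 3
    have e4 := h 4
    have e5 := h 5
    have e6 := h 6
    have e7 := h 7
    have e8 := h 8
    rw [sumPhi] at e0 e1 e2 e3 e4 e5 e6 e7 e8
    norm_num at e0 e1 e2 e3 e4 e5 e6 e7 e8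
    simp only [show (18:ZMod 18)=0 by decide, show (19:ZMod 18)=1 by decide, show (20:ZMod 18)=2 by decide, show (21:ZMod 18)=3 by decide, show (22:ZMod 18)=4 by decide, show (23:ZMod 18)=5 by decide, show (24:ZMod 18)=6 by decide, show (25:ZMod 18)=7 by decide, show (26:ZMod 18)=8 by decide, show (27:ZMod 18)=9 by decide, show (28:ZMod 18)=10 by decide, show (29:ZMod 18)=11 by decide, show (30:ZMod 18)=12 by decide, show (31:ZMod 18)=13 by decide, show (32:ZMod 18)=14 by decide, show (33:ZMod 18)=15 by decide, show (34:ZMod 18)=16 by decide, show (35:ZMod 18)=17 by decide] at e0 e1 e2 e3 e4 e5 e6 e7 e8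
    rw [AddSubgroup.mem_closure_pair]
    refine ⟨v 17, -(v 16), ?_⟩
    ext c
    simp only [Finsupp.add_apply, Finsupp.smul_apply, smul_eq_mul]
    rcases zmodCases c with rfl|rfl|rfl|rfl|rfl|rfl|rfl|rfl|rfl|rfl|rfl|rfl|rfl|rfl|rfl|rfl|rfl|rfl <;>
      simp only [w1_0, w1_1, w1_2, w1_3, w1_4, w1_5, w1_6, w1_7, w1_8, w1_9, w1_10, w1_11, w1_12, w1_13, w1_14, w1_15, w1_16, w1_17, w2_0, w2_1, w2_2, w2_3, w2_4, w2_5, w2_6, w2_7, w2_8, w2_9, w2_10, w2_11, w2_12, w2_13, w2_14, w2_15, w2_16, w2_17] <;> linarith [e0, e1, e2, e3, e4, e5, e6, e7, e8, z1, z4, z5, z7, z8, z9, z11, z12, z15]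
  · intro hmem a
    obtain ⟨m, n, rfl⟩ := AddSubgroup.mem_closure_pair.mp hmem
    rw [sumPhi]
    simp only [Finsupp.add_apply, Finsupp.smul_apply, smul_eq_mul]
    rcases zmodCases a with rfl|rfl|rfl|rfl|rfl|rfl|rfl|rfl|rfl|rfl|rfl|rfl|rfl|rfl|rfl|rfl|rfl|rfl <;>
      · norm_num
        simp only [show (18:ZMod 18)=0 by decide, show (19:ZMod 18)=1 by decide, show (20:ZMod 18)=2 by decide, show (21:ZMod 18)=3 by decide, show (22:ZMod 18)=4 by decide, show (23:ZMod 18)=5 by decide, show (24:ZMod 18)=6 by decide, show (25:ZMod 18)=7 by decide, show (26:ZMod 18)=8 by decide, show (27:ZMod 18)=9 by decide, show (28:ZMod 18)=10 by decide, show (29:ZMod 18)=11 by decide, show (30:ZMod 18)=12 by decide, show (31:ZMod 18)=13 by decide, show (32:ZMod 18)=14 by decide, show (33:ZMod 18)=15 by decide, show (34:ZMod 18)=16 by decide, show (35:ZMod 18)=17 by decide, show (36:ZMod 18)=18 by decide, show (37:ZMod 18)=19 by decide, show (38:ZMod 18)=20 by decide, show (39:ZMod 18)=21 by decide, show (40:ZMod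 18)=22 by decide, show (41:ZMod 18)=23 by decide, show (42:ZMod 18)=24 by decide, show (43:ZMod 18)=25 by decide]
        simp only [w1_0, w1_1, w1_2, w1_3, w1_4, w1_5, w1_6, w1_7, w1_8, w1_9, w1_10, w1_11, w1_12, w1_13, w1_14, w1_15, w1_16, w1_17, w2_0, w2_1, w2_2, w2_3, w2_4, w2_5, w2_6, w2_7, w2_8, w2_9, w2_10, w2_11, w2_12, w2_13, w2_14, w2_15, w2_16, w2_17]
        ring
end

section
/- Let g ≥ 3 and let I, J, K, L ⊆ {1,...,g} be such that 1 ∉ I ∪ J and 1 ∈ I' ∩ J', where I', J' ⊆ {1,...,g}. In the root system C_{2^{g-1}} realized with roots ±e_A ± e_B for subsets A ≤ B of {2,...,g} (equivalently roots e_A + e_B for A ≤ B ⊆ {1,...,g}, using that e_A + e_{Aᶜ} is constant): if the sum (e_I + e_J) + (e_{I'} + e_{J'}) of two such roots, with J = {2,...,g}\I and J' = {1} ∪ (I')ᶜ, is again a root or zero, then it is zero, and this forces I' = Iᶜ (with J' = Jᶜ) or I' = Jᶜ (with J' = Iᶜ). -/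
/-- The character `e_A` of the maximal torus of `GSp_{2^{g-1}·2}` attached to a subset
`A ⊆ {1,...,g}` (the element `1` of `{1,...,g}` is coded as `⟨0, hg⟩ : Fin g`), realised
concretely so that `e_A + e_{Aᶜ} = (1, 0)` is the constant (similitude) character: for
`1 ∉ A`, `e_A` is the standard basis vector `x_A`, and for `1 ∈ A`, `e_A = (1,0) − x_{Aᶜ}`. -/
def rvec {g : ℕ} (hg : 0 < g) (A : Finset (Fin g)) : ℤ × (Finset (Fin g) → ℤ) :=
  if (⟨0, hg⟩ : Fin g) ∈ A then (1, fun B => if B = Aᶜ then -1 else 0)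
  else (0, fun B => if B = A then 1 else 0)

/-- Partner relation is symmetric: if `z ∉ S` then `(Sᶜ.erase z)ᶜ.erase z = S`. -/
lemma stmt19_aux_pair {g : ℕ} {z : Fin g} {S : Finset (Fin g)} (hS : z ∉ S) :
    (Sᶜ.erase z)ᶜ.erase z = S := by
  rw [Finset.compl_erase, compl_compl, Finset.erase_insert hS]

/-- A set is never equal to its partner when `g ≥ 3`. -/
lemma stmt19_aux_ne {g : ℕ} (hg3 : 3 ≤ g) (z : Fin g) (S : Finset (Fin g)) :
    S ≠ Sᶜ.erase z := by
  intro h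
  have hS0 : S = ∅ := Finset.eq_empty_of_forall_notMem fun x hx => by
    have hx' : x ∈ Sᶜ := Finset.mem_of_mem_erase (h ▸ hx)
    exact (Finset.mem_compl.mp hx') hx
  rw [hS0] at h
  have hx : (⟨1, by omega⟩ : Fin g) ∈ (∅ : Finset (Fin g))ᶜ.erase z ∨
      (⟨2, by omega⟩ : Fin g) ∈ (∅ : Finset (Fin g))ᶜ.erase z := by
    by_cases hz1 : z = (⟨1, by omega⟩ : Fin g)
    · right
      refine Finset.mem_erase.mpr ⟨?_, by simp⟩
      rw [hz1]
      intro hcon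
      exact absurd (congrArg Fin.val hcon) (by simp)
    · left
      exact Finset.mem_erase.mpr ⟨fun hc => hz1 hc.symm, by simp⟩
  rcases hx with hx | hx <;> rw [← h] at hx <;> exact absurd hx (Finset.notMem_empty _)

/-- let `1 ∉ I ∪ J`, `1 ∈ I' ∩ J'`, with `J = {2,...,g} \ I` and
`J' = {1} ∪ (I')ᶜ`.  If the sum `(e_I + e_J) + (e_{I'} + e_{J'})` of the two roots
`e_I + e_J − ε₀` and `e_{I'} + e_{J'} − ε₀` is again a root (of the form `e_A + e_B − ε₀`)
or zero, then it is zero, and this forces `I' = Iᶜ` (with `J' = Jᶜ`) or `I' = Jᶜ`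
(with `J' = Iᶜ`). -/
theorem stmt19 (g : ℕ) (hg : 0 < g) (hg3 : 3 ≤ g)
    (I J I' J' : Finset (Fin g))
    (hI : (⟨0, hg⟩ : Fin g) ∉ I) (hJ0 : (⟨0, hg⟩ : Fin g) ∉ J)
    (hI' : (⟨0, hg⟩ : Fin g) ∈ I') (hJ'0 : (⟨0, hg⟩ : Fin g) ∈ J')
    (hJ : J = Iᶜ \ {(⟨0, hg⟩ : Fin g)})
    (hJ' : J' = insert (⟨0, hg⟩ : Fin g) I'ᶜ)
    (hroot :
      (∃ A B : Finset (Fin g),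
          rvec hg I + rvec hg J + rvec hg I' + rvec hg J' - (1, 0) - (1, 0) =
            rvec hg A + rvec hg B - (1, 0)) ∨
        rvec hg I + rvec hg J + rvec hg I' + rvec hg J' - (1, 0) - (1, 0) = 0) :
    rvec hg I + rvec hg J + rvec hg I' + rvec hg J' - (1, 0) - (1, 0) = 0 ∧
      ((I' = Iᶜ ∧ J' = Jᶜ) ∨ (I' = Jᶜ ∧ J' = Iᶜ)) := by
  set z : Fin g := ⟨0, hg⟩ with hzdef
  have hzI' : z ∉ I'ᶜ := by simp [hI']
  have hJe : J = Iᶜ.erase z := by rw [hJ, Finset.erase_eq]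
  have hJ'c : J'ᶜ = I'.erase z := by rw [hJ', Finset.compl_insert, compl_compl]
  have hIp : Jᶜ.erase z = I := by rw [hJe]; exact stmt19_aux_pair hI
  have hN1p : J'ᶜᶜ.erase z = I'ᶜ := by
    rw [hJ'c, Finset.compl_erase, Finset.erase_insert hzI']
  -- basic distinctness
  have hIJ : I ≠ J := hJe ▸ stmt19_aux_ne hg3 z I
  have hNN : I'ᶜ ≠ J'ᶜ := by
    have h := stmt19_aux_ne hg3 z I'ᶜ
    rw [compl_compl] at h
    rw [hJ'c]; exact h
  -- explicit forms of rvec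
  have e1 : rvec hg I = (0, fun B => if B = I then (1:ℤ) else 0) := by
    rw [rvec, if_neg hI]
  have e2 : rvec hg J = (0, fun B => if B = J then (1:ℤ) else 0) := by
    rw [rvec, if_neg hJ0]
  have e3 : rvec hg I' = (1, fun B => if B = I'ᶜ then (-1:ℤ) else 0) := by
    rw [rvec, if_pos hI']
  have e4 : rvec hg J' = (1, fun B => if B = J'ᶜ then (-1:ℤ) else 0) := by
    rw [rvec, if_pos hJ'0]
  -- key step: I is one of the two negative supports
  have key : I = I'ᶜ ∨ I = J'ᶜ := by
    by_contra hcon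
    push_neg at hcon
    obtain ⟨h1, h2⟩ := hcon
    have hJ1 : J ≠ I'ᶜ := by
      intro h
      apply h2
      rw [← hIp, h, compl_compl, hJ'c]
    have hJ2 : J ≠ J'ᶜ := by
      intro h
      apply h1
      rw [← hIp, h]
      exact hN1p
    rcases hroot with ⟨A, B, hAB⟩ | h0
    · by_cases hA : z ∈ A <;> by_cases hB : z ∈ B
      · have eA : rvec hg A = (1, fun B' => if B' = Aᶜ then (-1:ℤ) else 0) := by
          rw [rvec, if_pos hA]
        have eB : rvec hg B = (1, fun B' => if B' = Bᶜ then (-1:ℤ) else 0) := by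
          rw [rvec, if_pos hB]
        have hfst := congrArg Prod.fst hAB
        simp [e1, e2, e3, e4, eA, eB] at hfst
      · have eA : rvec hg A = (1, fun B' => if B' = Aᶜ then (-1:ℤ) else 0) := by
          rw [rvec, if_pos hA]
        have eB : rvec hg B = (0, fun B' => if B' = B then (1:ℤ) else 0) := by
          rw [rvec, if_neg hB]
        have hvI := congrArg (fun p => p.2 I) hAB
        have hvJ := congrArg (fun p => p.2 J) hAB
        simp [e1, e2, e3, e4, eA, eB, hIJ, h1, h2] at hvI hvJ
        have hIB : I = B := by
          by_contra hx
          rw [if_neg hx] at hvI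
          split_ifs at hvI <;> omega
        have hJB : J = B := by
          by_contra hx
          rw [if_neg hx] at hvJ
          split_ifs at hvJ <;> omega
        exact hIJ (hIB.trans hJB.symm)
      · have eA : rvec hg A = (0, fun B' => if B' = A then (1:ℤ) else 0) := by
          rw [rvec, if_neg hA]
        have eB : rvec hg B = (1, fun B' => if B' = Bᶜ then (-1:ℤ) else 0) := by
          rw [rvec, if_pos hB]
        have hvI := congrArg (fun p => p.2 I) hAB
        have hvJ := congrArg (fun p => p.2 J) hAB
        simp [e1, e2, e3, e4, eA, eB, hIJ, h1, h2] at hvI hvJ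
        have hIB : I = A := by
          by_contra hx
          rw [if_neg hx] at hvI
          split_ifs at hvI <;> omega
        have hJB : J = A := by
          by_contra hx
          rw [if_neg hx] at hvJ
          split_ifs at hvJ <;> omega
        exact hIJ (hIB.trans hJB.symm)
      · have eA : rvec hg A = (0, fun B' => if B' = A then (1:ℤ) else 0) := by
          rw [rvec, if_neg hA]
        have eB : rvec hg B = (0, fun B' => if B' = B then (1:ℤ) else 0) := by
          rw [rvec, if_neg hB]
        have hfst := congrArg Prod.fst hAB
        simp [e1, e2, e3, e4, eA, eB] at hfst
    · have hvI := congrArg (fun p => p.2 I) h0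
      simp [e1, e2, e3, e4, hIJ, h1, h2] at hvI
  -- conclude
  rcases key with h | h
  · have hI'I : I' = Iᶜ := by rw [h, compl_compl]
    have hJc : J'ᶜ = J := by rw [hJ'c, hI'I, ← hJe]
    have hJ'J : J' = Jᶜ := by rw [← hJc, compl_compl]
    refine ⟨?_, Or.inl ⟨hI'I, hJ'J⟩⟩
    have e3' : rvec hg I' = (1, fun B => if B = I then (-1:ℤ) else 0) := by
      rw [e3, ← h]
    have e4' : rvec hg J' = (1, fun B => if B = J then (-1:ℤ) else 0) := by
      rw [e4, hJc]
    rw [e1, e2, e3', e4']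
    refine Prod.ext ?_ ?_
    · simp
    · funext X
      simp only [Prod.snd_add, Prod.snd_sub, Pi.add_apply, Pi.sub_apply]
      split_ifs <;> simp
  · have hJc2 : Jᶜ = insert z I := by rw [hJe, Finset.compl_erase, compl_compl]
    have hI'J : I' = Jᶜ := by rw [hJc2, h, hJ'c, Finset.insert_erase hI']
    have hI'cJ : I'ᶜ = J := by rw [hI'J, compl_compl]
    have hJ'I : J' = Iᶜ := by
      rw [hJ', hI'cJ, hJe, Finset.insert_erase (Finset.mem_compl.mpr hI)]
    refine ⟨?_, Or.inr ⟨hI'J, hJ'I⟩⟩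
    have e3' : rvec hg I' = (1, fun B => if B = J then (-1:ℤ) else 0) := by
      rw [e3, hI'cJ]
    have e4' : rvec hg J' = (1, fun B => if B = I then (-1:ℤ) else 0) := by
      rw [e4, ← h]
    rw [e1, e2, e3', e4']
    refine Prod.ext ?_ ?_
    · simp
    · funext X
      simp only [Prod.snd_add, Prod.snd_sub, Pi.add_apply, Pi.sub_apply]
      split_ifs <;> simp
end
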